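/- arXiv:math/9809005 — 3 statements merged into one kernel-verified Lean document; each statement's English description precedes it below -/
import Mathlib

section
/- Let G be a connected real Lie group, μ a left Haar measure on G, and π a strongly continuous unitary representation of G on a separable complex Hilbert space H. For a compactly supported continuous function φ : G → ℂ, let π(φ) denote the bounded operator on H given by the Bochner integral π(φ)u = ∫_G φ(g)·(π(g)u) dμ(g). Then the following are equivalent: (a) there exist an open neighborhood V of the identity element of G and an integer m ≥ 0 such that for every m-times continuously differentiable function φ : G → ℂ with compact support contained in V, the operator π(φ) is trace class; (b) there exists an integer m ≥ 0 such that for every m-times continuously differentiable compactly supported function φ : G → ℂ, the operator π(φ) is trace class. (Equivalence of conditions 3) and 4) of Proposition I.1.) -/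
open MeasureTheory Manifold TopologicalSpace

/-- A bounded operator on a Hilbert space is *Hilbert–Schmidt* if `∑ᵢ ‖S eᵢ‖² < ∞` for
some (equivalently, every) Hilbert basis `(eᵢ)`. -/
def IsHilbertSchmidt {H : Type*} [NormedAddCommGroup H] [InnerProductSpace ℂ H]
    (S : H →L[ℂ] H) : Prop :=
  ∃ (ι : Type) (e : HilbertBasis ι ℂ H), Summable fun i => ‖S (e i)‖ ^ 2

/-- A bounded operator is *trace class* if it is the composition of two Hilbert–Schmidt
operators. -/
def IsTraceClass {H : Type*} [NormedAddCommGroup H] [InnerProductSpace ℂ H]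
    (S : H →L[ℂ] H) : Prop :=
  ∃ S₁ S₂ : H →L[ℂ] H, IsHilbertSchmidt S₁ ∧ IsHilbertSchmidt S₂ ∧ S = S₁.comp S₂

/-!
Only `(a) → (b)` needs an argument. For `φ ∈ C^m_c(G)`, a smooth partition of unity `(fᵢ)`
subordinate to the translates `i V` writes `φ` as a finite sum `∑ᵢ fᵢ φ`, where `fᵢ φ` is the left
translate by `i` of some `ψᵢ ∈ C^m_c(V)`. By left invariance of `μ`, `π(fᵢ φ) = π(i) π(ψᵢ)`, so
`π(φ)` is a finite sum of trace-class operators. Partitions of unity need σ-compactness, which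
holds because a connected group is the union of the powers of any symmetric compact neighbourhood
of `1`. Finally, trace-class operators are closed under addition: in infinite dimension two
isometries with orthogonal ranges factor `S₁ S₂ + T₁ T₂` through Hilbert–Schmidt operators.
-/

open scoped InnerProductSpace ENNReal Pointwise
open Set Filter Topology

section HilbertBasis

variable {𝕜 E : Type*} [RCLike 𝕜] [NormedAddCommGroup E] [InnerProductSpace 𝕜 E]

theorem Orthonormal.countable [SeparableSpace E] {ι : Type*} {v : ι → E}
    (hv : Orthonormal 𝕜 v) : Countable ι := by
  have hdisj : Pairwise fun i j =>
      Disjoint (Metric.ball (v i) (1 / 2)) (Metric.ball (v j) (1 / 2)) := by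
    intro i j hij
    refine Metric.ball_disjoint_ball ?_
    have hsq : ‖v i - v j‖ ^ 2 = 2 := by
      rw [norm_sub_sq (𝕜 := 𝕜), hv.1 i, hv.1 j, hv.2 hij]
      norm_num
    rw [dist_eq_norm]
    nlinarith [norm_nonneg (v i - v j)]
  exact hdisj.countable_of_isOpen_disjoint (fun _ => Metric.isOpen_ball)
    (fun _ => Metric.nonempty_ball.2 one_half_pos)

theorem exists_hilbertBasis_of_separableSpace [CompleteSpace E] [SeparableSpace E] :
    ∃ ι : Type, Nonempty (HilbertBasis ι 𝕜 E) := by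
  obtain ⟨w, b, -⟩ := exists_hilbertBasis 𝕜 E
  have : Countable w := b.orthonormal.countable
  let e := (equivShrink.{0} w).symm
  refine ⟨Shrink.{0} w, ⟨HilbertBasis.mk (b.orthonormal.comp e e.injective) ?_⟩⟩
  rw [e.surjective.range_comp, b.dense_span]

theorem inner_eq_zero_of_hasSum {ι : Type*} {f : ι → E} {y : E} (hf : HasSum f y) {z : E}
    (h : ∀ i, ⟪z, f i⟫_𝕜 = 0) : ⟪z, y⟫_𝕜 = 0 :=
  (hf.mapL (innerSL 𝕜 z)).unique (by simp [h])

variable {ι : Type*}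

theorem HilbertBasis.hasSum_norm_inner_sq (b : HilbertBasis ι 𝕜 E) (x : E) :
    HasSum (fun i => ‖⟪b i, x⟫_𝕜‖ ^ 2) (‖x‖ ^ 2) := by
  have h := b.hasSum_inner_mul_inner x x
  have hterm : ∀ i, ⟪x, b i⟫_𝕜 * ⟪b i, x⟫_𝕜 = ((‖⟪b i, x⟫_𝕜‖ ^ 2 : ℝ) : 𝕜) := fun i => by
    rw [← inner_conj_symm x (b i), RCLike.conj_mul]
    norm_cast
  simp only [hterm, inner_self_eq_norm_sq_to_K] at h
  exact (RCLike.hasSum_ofReal 𝕜).mp (by exact_mod_cast h)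

theorem HilbertBasis.tsum_enorm_inner_sq (b : HilbertBasis ι 𝕜 E) (x : E) :
    ∑' i, ‖⟪b i, x⟫_𝕜‖ₑ ^ 2 = ‖x‖ₑ ^ 2 := by
  have h := b.hasSum_norm_inner_sq x
  simp only [← ofReal_norm, ← ENNReal.ofReal_pow (norm_nonneg _)]
  rw [← ENNReal.ofReal_tsum_of_nonneg (fun _ => by positivity) h.summable, h.tsum_eq]

variable [CompleteSpace E]

/-- The isometry sending `b i` to `v i`. -/
noncomputable def HilbertBasis.isometryOfOrthonormal (b : HilbertBasis ι 𝕜 E) {v : ι → E}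
    (hv : Orthonormal 𝕜 v) : E →ₗᵢ[𝕜] E :=
  hv.orthogonalFamily.linearIsometry.comp b.repr.toLinearIsometry

theorem HilbertBasis.hasSum_isometryOfOrthonormal (b : HilbertBasis ι 𝕜 E) {v : ι → E}
    (hv : Orthonormal 𝕜 v) (x : E) :
    HasSum (fun i => b.repr x i • v i) (b.isometryOfOrthonormal hv x) := by
  simpa [LinearIsometry.toSpanSingleton_apply, HilbertBasis.isometryOfOrthonormal] using
    hv.orthogonalFamily.hasSum_linearIsometry (b.repr x)

theorem HilbertBasis.inner_isometryOfOrthonormal_eq_zero (b : HilbertBasis ι 𝕜 E)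
    {v w : ι → E} (hv : Orthonormal 𝕜 v) (hw : Orthonormal 𝕜 w) (hvw : ∀ i j, ⟪v i, w j⟫_𝕜 = 0)
    (x y : E) : ⟪b.isometryOfOrthonormal hv x, b.isometryOfOrthonormal hw y⟫_𝕜 = 0 := by
  have hw_perp : ∀ j, ⟪w j, b.isometryOfOrthonormal hv x⟫_𝕜 = 0 := fun j =>
    inner_eq_zero_of_hasSum (b.hasSum_isometryOfOrthonormal hv x) fun i => by
      rw [inner_smul_right, ← inner_conj_symm, hvw, map_zero, mul_zero]
  exact inner_eq_zero_of_hasSum (b.hasSum_isometryOfOrthonormal hw y) fun j => by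
    rw [inner_smul_right, ← inner_conj_symm, hw_perp, map_zero, mul_zero]

theorem exists_linearIsometry_pair_orthogonal (hE : ¬FiniteDimensional 𝕜 E) :
    ∃ J₁ J₂ : E →ₗᵢ[𝕜] E, ∀ x y, ⟪J₁ x, J₂ y⟫_𝕜 = 0 := by
  obtain ⟨w, b, -⟩ := exists_hilbertBasis 𝕜 E
  have : Infinite w := not_finite_iff_infinite.mp fun _ =>
    have := Fintype.ofFinite w
    hE (Module.Finite.of_basis b.toOrthonormalBasis.toBasis)
  obtain ⟨e⟩ : Nonempty (w ⊕ w ≃ w) := by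
    rw [← Cardinal.eq, Cardinal.mk_sum, Cardinal.lift_id,
      Cardinal.add_eq_self (Cardinal.aleph0_le_mk w)]
  have hv₁ := b.orthonormal.comp _ (e.injective.comp Sum.inl_injective)
  have hv₂ := b.orthonormal.comp _ (e.injective.comp Sum.inr_injective)
  refine ⟨b.isometryOfOrthonormal hv₁, b.isometryOfOrthonormal hv₂,
    b.inner_isometryOfOrthonormal_eq_zero hv₁ hv₂ fun i j => b.orthonormal.2 ?_⟩
  simp

end HilbertBasis

section HilbertSchmidt

open ContinuousLinearMap (adjoint adjoint_adjoint adjoint_comp adjoint_inner_left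
  adjoint_inner_right)

variable {H : Type*} [NormedAddCommGroup H] [InnerProductSpace ℂ H] {ι κ : Type*}

theorem IsHilbertSchmidt.clm_comp (B : H →L[ℂ] H) {S : H →L[ℂ] H} (h : IsHilbertSchmidt S) :
    IsHilbertSchmidt (B ∘L S) := by
  obtain ⟨ι, b, hb⟩ := h
  refine ⟨ι, b, (hb.mul_left (‖B‖ ^ 2)).of_nonneg_of_le (fun _ => by positivity) fun i => ?_⟩
  calc ‖(B ∘L S) (b i)‖ ^ 2 ≤ (‖B‖ * ‖S (b i)‖) ^ 2 := by gcongr; exact B.le_opNorm _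
    _ = ‖B‖ ^ 2 * ‖S (b i)‖ ^ 2 := mul_pow _ _ _

theorem IsTraceClass.clm_comp (B : H →L[ℂ] H) {S : H →L[ℂ] H} (h : IsTraceClass S) :
    IsTraceClass (B ∘L S) := by
  obtain ⟨S₁, S₂, h₁, h₂, rfl⟩ := h
  exact ⟨B ∘L S₁, S₂, h₁.clm_comp B, h₂, (ContinuousLinearMap.comp_assoc _ _ _).symm⟩

theorem isTraceClass_of_finiteDimensional [FiniteDimensional ℂ H] (S : H →L[ℂ] H) :
    IsTraceClass S := by
  have hHS (T : H →L[ℂ] H) : IsHilbertSchmidt T :=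
    ⟨_, (stdOrthonormalBasis ℂ H).toHilbertBasis, Summable.of_finite⟩
  exact ⟨S, ContinuousLinearMap.id ℂ H, hHS _, hHS _, rfl⟩

noncomputable def hilbertSchmidtSum (S : H →L[ℂ] H) (b : HilbertBasis ι ℂ H) : ℝ≥0∞ :=
  ∑' i, ‖S (b i)‖ₑ ^ 2

theorem summable_norm_sq_iff_hilbertSchmidtSum_ne_top (S : H →L[ℂ] H) (b : HilbertBasis ι ℂ H) :
    (Summable fun i => ‖S (b i)‖ ^ 2) ↔ hilbertSchmidtSum S b ≠ ⊤ := by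
  simp only [hilbertSchmidtSum, enorm_eq_nnnorm, ← ENNReal.coe_pow,
    ENNReal.tsum_coe_ne_top_iff_summable, ← NNReal.summable_coe, NNReal.coe_pow, coe_nnnorm]

variable [CompleteSpace H]

theorem hilbertSchmidtSum_eq_adjoint (S : H →L[ℂ] H) (b : HilbertBasis ι ℂ H)
    (c : HilbertBasis κ ℂ H) : hilbertSchmidtSum S b = hilbertSchmidtSum (adjoint S) c :=
  calc hilbertSchmidtSum S b = ∑' i, ∑' j, ‖⟪c j, S (b i)⟫_ℂ‖ₑ ^ 2 := by
        simp only [hilbertSchmidtSum, c.tsum_enorm_inner_sq]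
    _ = ∑' j, ∑' i, ‖⟪b i, (adjoint S) (c j)⟫_ℂ‖ₑ ^ 2 := by
        rw [ENNReal.tsum_comm]
        congr! 4 with j i
        rw [← adjoint_inner_left, ← inner_conj_symm, RCLike.enorm_conj]
    _ = hilbertSchmidtSum (adjoint S) c := by
        simp only [hilbertSchmidtSum, b.tsum_enorm_inner_sq]

theorem hilbertSchmidtSum_basis_indep (S : H →L[ℂ] H) (b : HilbertBasis ι ℂ H)
    (c : HilbertBasis κ ℂ H) :
    hilbertSchmidtSum S b = hilbertSchmidtSum S c := by
  rw [hilbertSchmidtSum_eq_adjoint S b c, hilbertSchmidtSum_eq_adjoint (adjoint S) c c,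
    adjoint_adjoint]

theorem IsHilbertSchmidt.summable {S : H →L[ℂ] H} (h : IsHilbertSchmidt S)
    (b : HilbertBasis ι ℂ H) : Summable fun i => ‖S (b i)‖ ^ 2 := by
  obtain ⟨κ, c, hc⟩ := h
  rw [summable_norm_sq_iff_hilbertSchmidtSum_ne_top] at hc ⊢
  rwa [hilbertSchmidtSum_basis_indep S b c]

theorem IsHilbertSchmidt.adjoint {S : H →L[ℂ] H} (h : IsHilbertSchmidt S) :
    IsHilbertSchmidt (adjoint S) := by
  obtain ⟨ι, b, hb⟩ := h
  refine ⟨ι, b, ?_⟩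
  rw [summable_norm_sq_iff_hilbertSchmidtSum_ne_top] at hb ⊢
  rwa [← hilbertSchmidtSum_eq_adjoint]

theorem IsHilbertSchmidt.isometry_comp_add {J₁ J₂ : H →ₗᵢ[ℂ] H}
    (hJ : ∀ x y, ⟪J₁ x, J₂ y⟫_ℂ = 0) {P Q : H →L[ℂ] H} (hP : IsHilbertSchmidt P)
    (hQ : IsHilbertSchmidt Q) :
    IsHilbertSchmidt (J₁.toContinuousLinearMap ∘L P + J₂.toContinuousLinearMap ∘L Q) := by
  obtain ⟨ι, b, hPb⟩ := hP
  refine ⟨ι, b, ?_⟩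
  have hpythagoras (i : ι) :
      ‖(J₁.toContinuousLinearMap ∘L P + J₂.toContinuousLinearMap ∘L Q) (b i)‖ ^ 2 =
        ‖P (b i)‖ ^ 2 + ‖Q (b i)‖ ^ 2 := by
    simp [norm_add_sq (𝕜 := ℂ), hJ]
  simpa only [hpythagoras] using hPb.add (hQ.summable b)

theorem IsTraceClass.add {A B : H →L[ℂ] H} (hA : IsTraceClass A) (hB : IsTraceClass B) :
    IsTraceClass (A + B) := by
  by_cases hfin : FiniteDimensional ℂ H
  · exact isTraceClass_of_finiteDimensional _
  obtain ⟨J₁, J₂, hJ⟩ := exists_linearIsometry_pair_orthogonal hfin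
  obtain ⟨S₁, S₂, hS₁, hS₂, rfl⟩ := hA
  obtain ⟨T₁, T₂, hT₁, hT₂, rfl⟩ := hB
  set K₁ := J₁.toContinuousLinearMap
  set K₂ := J₂.toContinuousLinearMap
  have h₁₁ (y : H) : adjoint K₁ (K₁ y) = y := congr($(J₁.adjoint_comp_self) y)
  have h₂₂ (y : H) : adjoint K₂ (K₂ y) = y := congr($(J₂.adjoint_comp_self) y)
  have h₁₂ (y : H) : adjoint K₁ (K₂ y) = 0 := ext_inner_left ℂ fun z => by
    simp [K₁, K₂, adjoint_inner_right, hJ]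
  have h₂₁ (y : H) : adjoint K₂ (K₁ y) = 0 := ext_inner_left ℂ fun z => by
    simp [K₁, K₂, adjoint_inner_right, inner_eq_zero_symm, hJ]
  -- `S₁ S₂ + T₁ T₂ = (S₁ K₁† + T₁ K₂†) (K₁ S₂ + K₂ T₂)`, as `Kᵢ† Kⱼ = δᵢⱼ`.
  refine ⟨adjoint (K₁ ∘L adjoint S₁ + K₂ ∘L adjoint T₁), K₁ ∘L S₂ + K₂ ∘L T₂,
    (hS₁.adjoint.isometry_comp_add hJ hT₁.adjoint).adjoint, hS₂.isometry_comp_add hJ hT₂, ?_⟩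
  ext x
  simp [adjoint_comp, h₁₁, h₂₂, h₁₂, h₂₁]

theorem isTraceClass_zero [SeparableSpace H] : IsTraceClass (0 : H →L[ℂ] H) := by
  obtain ⟨ι, ⟨b⟩⟩ := exists_hilbertBasis_of_separableSpace (𝕜 := ℂ) (E := H)
  have h0 : IsHilbertSchmidt (0 : H →L[ℂ] H) := ⟨ι, b, by simp⟩
  exact ⟨0, 0, h0, h0, rfl⟩

theorem isTraceClass_sum [SeparableSpace H] (s : Finset κ) (F : κ → H →L[ℂ] H)
    (hF : ∀ k ∈ s, IsTraceClass (F k)) : IsTraceClass (∑ k ∈ s, F k) :=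
  Finset.sum_induction _ _ (fun _ _ => IsTraceClass.add) isTraceClass_zero hF

end HilbertSchmidt

section TopologicalGroup

variable {G : Type*} [TopologicalSpace G] [Group G] [IsTopologicalGroup G]

theorem iUnion_pow_eq_univ_of_mem_nhds_one [ConnectedSpace G] {S : Set G} (hS : S ∈ 𝓝 1)
    (hS_symm : S⁻¹ = S) : ⋃ n : ℕ, S ^ n = univ := by
  let N : Subgroup G :=
    { carrier := ⋃ n : ℕ, S ^ n
      mul_mem' := by
        simp only [mem_iUnion]
        rintro _ _ ⟨m, ha⟩ ⟨n, hb⟩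
        exact ⟨m + n, pow_add S m n ▸ mul_mem_mul ha hb⟩
      one_mem' := mem_iUnion.2 ⟨0, by simp⟩
      inv_mem' := by
        simp only [mem_iUnion]
        rintro _ ⟨n, ha⟩
        exact ⟨n, by rwa [← hS_symm, inv_pow, Set.inv_mem_inv]⟩ }
  have hN : IsOpen (N : Set G) :=
    N.isOpen_of_mem_nhds (mem_of_superset hS (subset_iUnion_of_subset 1 (pow_one S).ge))
  exact IsClopen.eq_univ ⟨N.isClosed_of_isOpen hN, hN⟩ ⟨1, N.one_mem⟩

theorem sigmaCompactSpace_of_connectedSpace [ConnectedSpace G] [WeaklyLocallyCompactSpace G] :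
    SigmaCompactSpace G := by
  obtain ⟨K, hK, hK1⟩ := exists_compact_mem_nhds (1 : G)
  have hcompact (n : ℕ) : IsCompact ((K ∪ K⁻¹) ^ n) := by
    induction n with
    | zero => simp
    | succ n ih => rw [pow_succ]; exact ih.mul (hK.union hK.inv)
  have hsymm : (K ∪ K⁻¹)⁻¹ = K ∪ K⁻¹ := by rw [union_inv, inv_inv, union_comm]
  exact ⟨⟨_, hcompact,
    iUnion_pow_eq_univ_of_mem_nhds_one (mem_of_superset hK1 subset_union_left) hsymm⟩⟩

end TopologicalGroup

section LieGroup

variable {E : Type*} [NormedAddCommGroup E] [NormedSpace ℝ E] [FiniteDimensional ℝ E]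
  {G : Type*} [TopologicalSpace G] [ChartedSpace E G] [Group G] [IsTopologicalGroup G]
  [LieGroup 𝓘(ℝ, E) (⊤ : ℕ∞) G] [T2Space G] [SigmaCompactSpace G]

theorem exists_finset_sum_translate_eq {V : Set G} (hV : IsOpen V) (hV1 : (1 : G) ∈ V) {m : ℕ}
    {φ : G → ℂ} (hφ : ContMDiff 𝓘(ℝ, E) 𝓘(ℝ, ℂ) m φ) (hφc : HasCompactSupport φ) :
    ∃ (T : Finset G) (ψ : G → G → ℂ),
      (∀ i, ContMDiff 𝓘(ℝ, E) 𝓘(ℝ, ℂ) m (ψ i) ∧ HasCompactSupport (ψ i) ∧ tsupport (ψ i) ⊆ V) ∧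
      ∀ x, φ x = ∑ i ∈ T, ψ i (i⁻¹ * x) := by
  obtain ⟨f, hf⟩ := SmoothPartitionOfUnity.exists_isSubordinate 𝓘(ℝ, E) (isClosed_tsupport φ)
    (fun i => (i⁻¹ * ·) ⁻¹' V) (fun i => hV.preimage (continuous_const_mul i⁻¹))
    (fun x _ => mem_iUnion.2 ⟨x, by simpa using hV1⟩)
  classical
  refine ⟨(f.locallyFinite.finite_nonempty_inter_compact hφc).toFinset,
    fun i => (⇑(f i) • φ) ∘ Homeomorph.mulLeft i, fun i => ⟨?_, ?_, ?_⟩, fun x => ?_⟩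
  · exact (((f i).contMDiff.of_le (by exact_mod_cast le_top)).smul hφ).comp contMDiff_mul_left
  · exact (hφc.smul_left).comp_homeomorph _
  · rw [tsupport_comp_eq_preimage]
    intro y hy
    simpa using hf i (tsupport_smul_subset_left _ _ hy)
  · simp only [Function.comp_apply, Homeomorph.coe_mulLeft, mul_inv_cancel_left, Pi.smul_apply',
      ← Finset.sum_smul]
    by_cases hx : x ∈ tsupport φ
    · rw [← finsum_eq_finsetSum_of_support_subset _ fun i hi => ?_, f.sum_eq_one hx, one_smul]
      simpa using ⟨x, hi, hx⟩
    · simp [image_eq_zero_of_notMem_tsupport hx]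

end LieGroup

theorem map_integral_smul_eq_integral_translate {G : Type*} [Group G] [MeasurableSpace G]
    [MeasurableMul G] (μ : Measure G) [μ.IsMulLeftInvariant] {H : Type*} [NormedAddCommGroup H]
    [NormedSpace ℂ H] [CompleteSpace H] (π : G →* (H →L[ℂ] H)) {φ : G → ℂ} {u : H}
    (hφ : Integrable (fun g => φ g • π g u) μ) (x : G) :
    π x (∫ g, φ g • π g u ∂μ) = ∫ g, φ (x⁻¹ * g) • π g u ∂μ := by
  rw [← ContinuousLinearMap.integral_comp_comm _ hφ,
    ← integral_mul_left_eq_self (fun g => φ (x⁻¹ * g) • π g u) x]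
  simp [map_mul, mul_apply_eq_comp]

theorem traceClass_locally_iff_globally_general
    {E : Type*} [NormedAddCommGroup E] [NormedSpace ℝ E] [FiniteDimensional ℝ E]
    {G : Type*} [TopologicalSpace G] [ChartedSpace E G] [Group G] [IsTopologicalGroup G]
    [LieGroup 𝓘(ℝ, E) (⊤ : ℕ∞) G] [ConnectedSpace G]
    [MeasurableSpace G] [BorelSpace G]
    (μ : Measure G) [μ.IsHaarMeasure]
    {H : Type*} [NormedAddCommGroup H] [InnerProductSpace ℂ H] [CompleteSpace H]
    [SeparableSpace H]
    (π : G →* (H →L[ℂ] H))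
    (hstrongcont : ∀ u : H, Continuous fun g => π g u) :
    (∃ V : Set G, IsOpen V ∧ (1 : G) ∈ V ∧ ∃ m : ℕ,
        ∀ φ : G → ℂ, ContMDiff 𝓘(ℝ, E) 𝓘(ℝ, ℂ) m φ → HasCompactSupport φ →
          tsupport φ ⊆ V →
          ∃ A : H →L[ℂ] H, (∀ u : H, A u = ∫ g, φ g • (π g u) ∂μ) ∧ IsTraceClass A) ↔
    (∃ m : ℕ, ∀ φ : G → ℂ, ContMDiff 𝓘(ℝ, E) 𝓘(ℝ, ℂ) m φ → HasCompactSupport φ →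
        ∃ A : H →L[ℂ] H, (∀ u : H, A u = ∫ g, φ g • (π g u) ∂μ) ∧ IsTraceClass A) := by
  refine ⟨fun ⟨V, hV, hV1, m, hloc⟩ => ⟨m, fun φ hφ hφc => ?_⟩,
    fun ⟨m, hglob⟩ => ⟨univ, isOpen_univ, mem_univ 1, m, fun φ hφ hφc _ => hglob φ hφ hφc⟩⟩
  -- `T2Space G` then follows, `G` being a topological group.
  have : T1Space G := ChartedSpace.t1Space E G
  have : LocallyCompactSpace G := ChartedSpace.locallyCompactSpace E G
  have : SigmaCompactSpace G := sigmaCompactSpace_of_connectedSpace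
  have hint {ψ : G → ℂ} (hψ : Continuous ψ) (hψc : HasCompactSupport ψ) (u : H) :
      Integrable (fun g => ψ g • π g u) μ :=
    (hψ.smul (hstrongcont u)).integrable_of_hasCompactSupport hψc.smul_right
  obtain ⟨T, ψ, hψ, hφψ⟩ := exists_finset_sum_translate_eq hV hV1 hφ hφc
  choose A hA hA_tc using fun i => hloc (ψ i) (hψ i).1 (hψ i).2.1 (hψ i).2.2
  refine ⟨∑ i ∈ T, π i ∘L A i, fun u => ?_, isTraceClass_sum T _ fun i _ => (hA_tc i).clm_comp _⟩
  have hint_translate (i : G) : Integrable (fun g => ψ i (i⁻¹ * g) • π g u) μ :=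
    hint ((hψ i).1.continuous.comp (continuous_const_mul _))
      ((hψ i).2.1.comp_homeomorph (Homeomorph.mulLeft i⁻¹)) u
  simp only [sum_apply, ContinuousLinearMap.comp_apply, hA,
    map_integral_smul_eq_integral_translate μ π (hint (hψ _).1.continuous (hψ _).2.1 u),
    hφψ, Finset.sum_smul]
  exact (integral_finsetSum T fun i _ => hint_translate i).symm

/-- Equivalence of conditions 3) and 4) of Proposition I.1: for a strongly continuous
unitary representation `π` of a connected Lie group `G` on a separable Hilbert space,
there is a neighbourhood `V` of the identity and an integer `m` such that `π(φ)` is trace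
class for all `φ ∈ C^m_c(V)` if and only if there is an integer `m` such that `π(φ)` is
trace class for all `φ ∈ C^m_c(G)`.  Here `π(φ)` is the bounded operator defined by the
Bochner integral `π(φ)u = ∫ φ(g)·(π(g)u) dμ(g)` for a left Haar measure `μ`. -/
theorem traceClass_locally_iff_globally
    {E : Type*} [NormedAddCommGroup E] [NormedSpace ℝ E] [FiniteDimensional ℝ E]
    {G : Type*} [TopologicalSpace G] [ChartedSpace E G] [Group G] [IsTopologicalGroup G]
    [LieGroup 𝓘(ℝ, E) (⊤ : ℕ∞) G] [ConnectedSpace G]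
    [MeasurableSpace G] [BorelSpace G]
    (μ : Measure G) [μ.IsHaarMeasure]
    {H : Type*} [NormedAddCommGroup H] [InnerProductSpace ℂ H] [CompleteSpace H]
    [SeparableSpace H]
    (π : G →* (H →L[ℂ] H))
    (hunitary : ∀ (g : G) (u : H), ‖π g u‖ = ‖u‖)
    (hstrongcont : ∀ u : H, Continuous fun g => π g u) :
    (∃ V : Set G, IsOpen V ∧ (1 : G) ∈ V ∧ ∃ m : ℕ,
        ∀ φ : G → ℂ, ContMDiff 𝓘(ℝ, E) 𝓘(ℝ, ℂ) m φ → HasCompactSupport φ →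
          tsupport φ ⊆ V →
          ∃ A : H →L[ℂ] H, (∀ u : H, A u = ∫ g, φ g • (π g u) ∂μ) ∧ IsTraceClass A) ↔
    (∃ m : ℕ, ∀ φ : G → ℂ, ContMDiff 𝓘(ℝ, E) 𝓘(ℝ, ℂ) m φ → HasCompactSupport φ →
        ∃ A : H →L[ℂ] H, (∀ u : H, A u = ∫ g, φ g • (π g u) ∂μ) ∧ IsTraceClass A) :=
  traceClass_locally_iff_globally_general μ π hstrongcont
end

section
/- Let Ω be a subset of ℝⁿ and let ξ₀ ∈ ℝⁿ, ξ₀ ≠ 0, be such that −ξ₀ does not belong to the asymptotic cone AC(Ω). Then there exist a neighborhood W of ξ₀ in ℝⁿ, a constant B > 0 and a real t₀ > 0 such that for every ω ∈ Ω, every ξ ∈ W and every t ≥ t₀ one has ‖ω + tξ‖ ≥ B t ‖ξ‖. (Key estimate in the proof of Theorem IV.3, part 1.) -/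
open Pointwise

/-- A *conic neighbourhood* of `ξ` is an open set containing `ξ` that is stable under
multiplication by positive scalars. -/
def IsConicNbhd {n : ℕ} (ξ : EuclideanSpace ℝ (Fin n))
    (C : Set (EuclideanSpace ℝ (Fin n))) : Prop :=
  IsOpen C ∧ ξ ∈ C ∧ ∀ t : ℝ, 0 < t → t • C = C

/-- The *asymptotic cone* of a subset `Ω` of `ℝⁿ`: the set of `ξ` such that every conic
neighbourhood of `ξ` has unbounded intersection with `Ω`. -/
def asympCone {n : ℕ} (Ω : Set (EuclideanSpace ℝ (Fin n))) :
    Set (EuclideanSpace ℝ (Fin n)) :=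
  {ξ | ∀ C, IsConicNbhd ξ C → ¬ Bornology.IsBounded (Ω ∩ C)}

/-- If `−ξ₀ ∉ AC(Ω)` and `ξ₀ ≠ 0`, then there are a neighbourhood `W` of `ξ₀`, a constant
`B > 0` and `t₀ > 0` such that `‖ω + tξ‖ ≥ B t ‖ξ‖` for all `ω ∈ Ω`, `ξ ∈ W`, `t ≥ t₀`. -/
theorem norm_add_smul_ge_of_not_mem_asympCone {n : ℕ}
    (Ω : Set (EuclideanSpace ℝ (Fin n))) (ξ₀ : EuclideanSpace ℝ (Fin n))
    (hξ₀ : ξ₀ ≠ 0) (h : -ξ₀ ∉ asympCone Ω) :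
    ∃ W ∈ nhds ξ₀, ∃ B : ℝ, 0 < B ∧ ∃ t₀ : ℝ, 0 < t₀ ∧
      ∀ ω ∈ Ω, ∀ ξ ∈ W, ∀ t : ℝ, t₀ ≤ t → B * t * ‖ξ‖ ≤ ‖ω + t • ξ‖ := by
  simp only [asympCone, Set.mem_setOf_eq, not_forall, not_not] at h
  obtain ⟨C, ⟨hCopen, hC0, hCcone⟩, hCbdd⟩ := h
  obtain ⟨δ, hδ, hball⟩ := Metric.isOpen_iff.mp hCopen (-ξ₀) hC0
  obtain ⟨R, hR⟩ := isBounded_iff_forall_norm_le.mp hCbdd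
  have hr : (0:ℝ) < ‖ξ₀‖ := norm_pos_iff.mpr hξ₀
  set r := ‖ξ₀‖ with hrdef
  refine ⟨Metric.ball ξ₀ (min (δ/4) (r/2)), Metric.ball_mem_nhds _ (by positivity),
    min (δ/(6*r)) (1/2), by positivity, max 1 ((4*(|R|+1))/r), by positivity, ?_⟩
  intro ω hω ξ hξ t ht
  by_contra hcon
  push_neg at hcon
  set B := min (δ/(6*r)) (1/2) with hBdef
  have hB2 : B ≤ 1/2 := min_le_right _ _
  have hBδ : B ≤ δ/(6*r) := min_le_left _ _
  have ht1 : (1:ℝ) ≤ t := le_trans (le_max_left _ _) ht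
  have htpos : (0:ℝ) < t := lt_of_lt_of_le one_pos ht1
  have htR : (4*(|R|+1))/r ≤ t := le_trans (le_max_right _ _) ht
  rw [Metric.mem_ball, dist_eq_norm] at hξ
  have hξd : ‖ξ - ξ₀‖ < min (δ/4) (r/2) := hξ
  have hξlo : r/2 ≤ ‖ξ‖ := by
    have := norm_sub_norm_le (ξ₀) ξ
    have h2 : ‖ξ₀ - ξ‖ < r/2 := by rw [norm_sub_rev]; exact lt_of_lt_of_le hξd (min_le_right _ _)
    linarith
  have hξhi : ‖ξ‖ ≤ 3*r/2 := by
    have := norm_le_norm_add_norm_sub' ξ ξ₀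
    have h2 : ‖ξ - ξ₀‖ < r/2 := lt_of_lt_of_le hξd (min_le_right _ _)
    linarith
  have hBξ : B * ‖ξ‖ ≤ δ/4 := by
    have : B * ‖ξ‖ ≤ (δ/(6*r)) * (3*r/2) := by
      apply mul_le_mul hBδ hξhi (norm_nonneg _) (by positivity)
    calc B * ‖ξ‖ ≤ (δ/(6*r)) * (3*r/2) := this
      _ = δ/4 := by field_simp; ring
  -- ω ∈ C
  have hωC : ω ∈ C := by
    have key : ‖ω + t • ξ₀‖ < t * δ := by
      have h1 : ‖ω + t • ξ₀‖ ≤ ‖ω + t • ξ‖ + ‖t • ξ₀ - t • ξ‖ := by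
        have : ω + t • ξ₀ = (ω + t • ξ) + (t • ξ₀ - t • ξ) := by abel
        rw [this]; exact norm_add_le _ _
      have h2 : ‖t • ξ₀ - t • ξ‖ = t * ‖ξ₀ - ξ‖ := by
        rw [← smul_sub, norm_smul, Real.norm_of_nonneg htpos.le]
      have h3 : ‖ξ₀ - ξ‖ ≤ δ/4 := by
        rw [norm_sub_rev]; exact le_of_lt (lt_of_lt_of_le hξd (min_le_left _ _))
      have h4 : ‖ω + t • ξ‖ < t * (δ/4) := by
        calc ‖ω + t • ξ‖ < B * t * ‖ξ‖ := hcon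
          _ = t * (B * ‖ξ‖) := by ring
          _ ≤ t * (δ/4) := by
            exact mul_le_mul_of_nonneg_left hBξ htpos.le
      have h5 : t * ‖ξ₀ - ξ‖ ≤ t * (δ/4) := mul_le_mul_of_nonneg_left h3 htpos.le
      nlinarith
    have hmem : t⁻¹ • ω ∈ Metric.ball (-ξ₀) δ := by
      rw [Metric.mem_ball, dist_eq_norm]
      have : t⁻¹ • ω - (-ξ₀) = t⁻¹ • (ω + t • ξ₀) := by
        rw [smul_add, smul_smul, inv_mul_cancel₀ (ne_of_gt htpos), one_smul]; abel
      rw [this, norm_smul, Real.norm_of_nonneg (inv_nonneg.mpr htpos.le)]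
      rw [inv_mul_lt_iff₀ htpos]
      exact key
    have : ω ∈ t • C := by
      refine ⟨t⁻¹ • ω, hball hmem, ?_⟩
      show t • t⁻¹ • ω = ω
      rw [smul_smul, mul_inv_cancel₀ (ne_of_gt htpos), one_smul]
    rwa [hCcone t htpos] at this
  -- norm lower bound
  have hbig : |R| + 1 ≤ ‖ω‖ := by
    have h1 : ‖ω‖ ≥ ‖t • ξ‖ - ‖ω + t • ξ‖ := by
      have h0 : ‖t • ξ‖ ≤ ‖ω + t • ξ‖ + ‖ω‖ := by
        calc ‖t • ξ‖ = ‖(ω + t • ξ) - ω‖ := by rw [add_sub_cancel_left]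
          _ ≤ ‖ω + t • ξ‖ + ‖ω‖ := norm_sub_le _ _
      linarith
    have h2 : ‖t • ξ‖ = t * ‖ξ‖ := by
      rw [norm_smul, Real.norm_of_nonneg htpos.le]
    have h3 : ‖ω + t • ξ‖ < B * t * ‖ξ‖ := hcon
    have h4 : B * t * ‖ξ‖ ≤ (1/2) * (t * ‖ξ‖) := by
      have : B * (t * ‖ξ‖) ≤ (1/2) * (t * ‖ξ‖) := by
        apply mul_le_mul_of_nonneg_right hB2 (by positivity)
      linarith [this]
    have h5 : t * ‖ξ‖ ≥ t * (r/2) := mul_le_mul_of_nonneg_left hξlo htpos.le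
    have h6 : t * (r/2) ≥ ((4*(|R|+1))/r) * (r/2) := by
      apply mul_le_mul_of_nonneg_right htR (by positivity)
    have h7 : ((4*(|R|+1))/r) * (r/2) = 2*(|R|+1) := by field_simp; ring
    have habs : (0:ℝ) ≤ |R| := abs_nonneg R
    nlinarith
  have := hR ω ⟨hω, hωC⟩
  have : R ≤ |R| := le_abs_self R
  linarith
end

section
/- Let μ be a tempered positive Borel measure on ℝⁿ. Let f : ℝⁿ → ℂ be a measurable rapidly decreasing function, i.e., for every N ∈ ℕ there is a constant C_N with |f(η)| ≤ C_N (1+‖η‖)^{−N} for all η ∈ ℝⁿ. Let ξ ∈ ℝⁿ, B > 0 and t₀ ≥ 1 be such that ‖ω + tξ‖ ≥ B t for every ω in the support of μ and every t ≥ t₀. Then the integral I(t) = ∫ f(ω + tξ) dμ(ω) is absolutely convergent for every t ≥ t₀ and is rapidly decreasing: for every N ∈ ℕ, sup_{t ≥ t₀} t^N |I(t)| < ∞. (Rapid-decay step in the proof of Theorem IV.3, part 1.) -/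
open MeasureTheory

/-- A positive Borel measure `μ` on `ℝⁿ` is *tempered* if `∫ (1+‖ω‖)^{−N₀} dμ(ω) < ∞`
for some natural number `N₀`. -/
def IsTemperedMeasure {n : ℕ} (μ : Measure (EuclideanSpace ℝ (Fin n))) : Prop :=
  ∃ N₀ : ℕ, ∫⁻ ω, ENNReal.ofReal ((1 + ‖ω‖) ^ (-(N₀ : ℝ))) ∂μ < ⊤

/-- The (topological) support of a measure: the set of points all of whose neighbourhoods
have positive measure. -/
def measureSupport {n : ℕ} (μ : Measure (EuclideanSpace ℝ (Fin n))) :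
    Set (EuclideanSpace ℝ (Fin n)) :=
  {x | ∀ U ∈ nhds x, μ U ≠ 0}

/-! On the support of `μ`, which is `μ`-conull, the hypothesis gives `t ≤ (1 + ‖ω + tξ‖) / B`,
and with the triangle inequality `1 + ‖ω‖ ≤ (1 + ‖ξ‖ / B) (1 + ‖ω + tξ‖)`. So the decay of `f`
of order `N + N₀` at `ω + tξ` yields `t ^ N ‖f (ω + tξ)‖ ≤ D_N (1 + ‖ω‖) ^ (-N₀)`, a majorant
independent of `t` that is `μ`-integrable when `N₀` is the temperedness exponent. -/

lemma measureSupport_eq_support {n : ℕ} (μ : Measure (EuclideanSpace ℝ (Fin n))) :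
    measureSupport μ = μ.support := by
  ext x
  simp [measureSupport, Measure.mem_support_iff_forall, pos_iff_ne_zero]

lemma IsTemperedMeasure.exists_integrable {n : ℕ} {μ : Measure (EuclideanSpace ℝ (Fin n))}
    (hμ : IsTemperedMeasure μ) :
    ∃ N₀ : ℕ, Integrable (fun ω => (1 + ‖ω‖) ^ (-(N₀ : ℝ))) μ := by
  obtain ⟨N₀, hN₀⟩ := hμ
  have hnonneg : ∀ ω : EuclideanSpace ℝ (Fin n), 0 ≤ (1 + ‖ω‖) ^ (-(N₀ : ℝ)) :=
    fun ω => by positivity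
  refine ⟨N₀, Measurable.aestronglyMeasurable (by fun_prop), ?_⟩
  exact (hasFiniteIntegral_iff_ofReal (.of_forall hnonneg)).2 hN₀

lemma pow_mul_inv_pow_add_le {t a b B K : ℝ} (N N₀ : ℕ) (ht : 0 ≤ t) (hB : 0 < B)
    (ha : 0 < a) (hb : 0 < b) (hta : B * t ≤ a) (hba : b ≤ K * a) :
    t ^ N * (a ^ (N + N₀))⁻¹ ≤ K ^ N₀ / B ^ N * (b ^ N₀)⁻¹ := by
  have hK : 0 < K := pos_of_mul_pos_left (hb.trans_le hba) ha.le
  rw [div_mul_eq_mul_div, ← div_eq_mul_inv, ← div_eq_mul_inv, div_div,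
    div_le_div_iff₀ (by positivity) (by positivity)]
  calc t ^ N * (b ^ N₀ * B ^ N) = (B * t) ^ N * b ^ N₀ := by ring
    _ ≤ a ^ N * (K * a) ^ N₀ := by gcongr
    _ = K ^ N₀ * a ^ (N + N₀) := by ring

section NormedSpace

variable {E F : Type*} [NormedAddCommGroup E] [NormedSpace ℝ E] [NormedAddCommGroup F]

lemma one_add_norm_le_of_mul_le_norm_add_smul {ω ξ : E} {t B : ℝ} (ht : 0 ≤ t) (hB : 0 < B)
    (h : B * t ≤ ‖ω + t • ξ‖) : 1 + ‖ω‖ ≤ (1 + ‖ξ‖ / B) * (1 + ‖ω + t • ξ‖) := by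
  have htri : ‖ω‖ ≤ ‖ω + t • ξ‖ + t * ‖ξ‖ := by
    simpa [norm_smul, abs_of_nonneg ht] using norm_sub_le (ω + t • ξ) (t • ξ)
  have hts : t * ‖ξ‖ ≤ ‖ξ‖ / B * ‖ω + t • ξ‖ := by
    rw [div_mul_eq_mul_div, le_div_iff₀ hB]
    nlinarith [norm_nonneg ξ]
  nlinarith [div_nonneg (norm_nonneg ξ) hB.le]

lemma pow_mul_norm_comp_add_smul_le {f : E → F} {C : ℝ} (N N₀ : ℕ)
    (hf : ∀ η, ‖f η‖ ≤ C * (1 + ‖η‖) ^ (-((N + N₀ : ℕ) : ℝ)))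
    {ω ξ : E} {t B : ℝ} (ht : 0 ≤ t) (hB : 0 < B) (h : B * t ≤ ‖ω + t • ξ‖) :
    t ^ N * ‖f (ω + t • ξ)‖ ≤ C * ((1 + ‖ξ‖ / B) ^ N₀ / B ^ N) * (1 + ‖ω‖) ^ (-(N₀ : ℝ)) := by
  have hC : 0 ≤ C := nonneg_of_mul_nonneg_left ((norm_nonneg _).trans (hf 0)) (by positivity)
  simp only [Real.rpow_neg_natCast, zpow_neg, zpow_natCast] at hf ⊢
  calc t ^ N * ‖f (ω + t • ξ)‖ ≤ C * (t ^ N * ((1 + ‖ω + t • ξ‖) ^ (N + N₀))⁻¹) := by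
        rw [mul_left_comm]; gcongr; exact hf _
    _ ≤ C * ((1 + ‖ξ‖ / B) ^ N₀ / B ^ N * ((1 + ‖ω‖) ^ N₀)⁻¹) := by
        refine mul_le_mul_of_nonneg_left ?_ hC
        exact pow_mul_inv_pow_add_le N N₀ ht hB (by positivity) (by positivity) (by linarith)
          (one_add_norm_le_of_mul_le_norm_add_smul ht hB h)
    _ = _ := by ring

end NormedSpace

section Integral

variable {α E : Type*} [MeasurableSpace α] [NormedAddCommGroup E] [NormedSpace ℝ E]
  {μ : Measure α}

lemma mul_norm_integral_le_of_ae_le {F : α → E} {g : α → ℝ} {c D : ℝ} (hc : 0 ≤ c)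
    (hg : Integrable g μ) (h : ∀ᵐ a ∂μ, c * ‖F a‖ ≤ D * g a) :
    c * ‖∫ a, F a ∂μ‖ ≤ D * ∫ a, g a ∂μ := by
  calc c * ‖∫ a, F a ∂μ‖ = ‖∫ a, c • F a ∂μ‖ := by
        rw [integral_smul, norm_smul, Real.norm_of_nonneg hc]
    _ ≤ ∫ a, D * g a ∂μ := by
        refine norm_integral_le_of_norm_le (hg.const_mul D) ?_
        simpa only [norm_smul, Real.norm_of_nonneg hc] using h
    _ = D * ∫ a, g a ∂μ := integral_const_mul D g

end Integral

/-- If `μ` is a tempered measure on `ℝⁿ`, `f` is measurable and rapidly decreasing, and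
`‖ω + tξ‖ ≥ B t` on the support of `μ` for `t ≥ t₀`, then `I(t) = ∫ f(ω + tξ) dμ(ω)` is
absolutely convergent for `t ≥ t₀` and rapidly decreasing as `t → +∞`. -/
theorem integral_rapid_decay_of_tempered {n : ℕ}
    (μ : Measure (EuclideanSpace ℝ (Fin n))) (htemp : IsTemperedMeasure μ)
    (f : EuclideanSpace ℝ (Fin n) → ℂ) (hfmeas : Measurable f)
    (hdecay : ∀ N : ℕ, ∃ C : ℝ, ∀ η, ‖f η‖ ≤ C * (1 + ‖η‖) ^ (-(N : ℝ)))
    (ξ : EuclideanSpace ℝ (Fin n)) (B : ℝ) (hB : 0 < B) (t₀ : ℝ) (ht₀ : 1 ≤ t₀)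
    (hsupp : ∀ ω ∈ measureSupport μ, ∀ t : ℝ, t₀ ≤ t → B * t ≤ ‖ω + t • ξ‖) :
    (∀ t : ℝ, t₀ ≤ t → Integrable (fun ω => f (ω + t • ξ)) μ) ∧
      ∀ N : ℕ, ∃ C : ℝ, ∀ t : ℝ, t₀ ≤ t → t ^ N * ‖∫ ω, f (ω + t • ξ) ∂μ‖ ≤ C := by
  obtain ⟨N₀, hg⟩ := htemp.exists_integrable
  have hbound : ∀ N : ℕ, ∃ D : ℝ, ∀ t : ℝ, t₀ ≤ t →
      ∀ᵐ ω ∂μ, t ^ N * ‖f (ω + t • ξ)‖ ≤ D * (1 + ‖ω‖) ^ (-(N₀ : ℝ)) := by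
    intro N
    obtain ⟨C, hC⟩ := hdecay (N + N₀)
    refine ⟨C * ((1 + ‖ξ‖ / B) ^ N₀ / B ^ N), fun t ht => ?_⟩
    filter_upwards [measureSupport_eq_support μ ▸ μ.support_mem_ae] with ω hω
    exact pow_mul_norm_comp_add_smul_le N N₀ hC (by linarith) hB (hsupp ω hω t ht)
  refine ⟨fun t ht => ?_, fun N => ?_⟩
  · obtain ⟨D, hD⟩ := hbound 0
    refine (hg.const_mul D).mono' (hfmeas.comp (measurable_add_const _)).aestronglyMeasurable ?_
    simpa only [pow_zero, one_mul] using hD t ht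
  · obtain ⟨D, hD⟩ := hbound N
    exact ⟨_, fun t ht => mul_norm_integral_le_of_ae_le (pow_nonneg (by linarith) N) hg (hD t ht)⟩
end
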